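/- arXiv:1502.04604 — 2 statements merged into one kernel-verified Lean document; each statement's English description precedes it below -/
import Mathlib

section
/- (SMDCT VIII discrete orthogonality) Let N, n ≥ 1 and let k, k' ∈ D_N^+, i.e., integer vectors with N−1 ≥ k_1 ≥ … ≥ k_n ≥ 0 and N−1 ≥ k'_1 ≥ … ≥ k'_n ≥ 0. Then Σ_{r ∈ D_N^+} H_r^{−1} · cos⁺_{k+ρ}(2(r_1+1/2)/(2N+1), …, 2(r_n+1/2)/(2N+1)) · cos⁺_{k'+ρ}(2(r_1+1/2)/(2N+1), …, 2(r_n+1/2)/(2N+1)) = H_k · ((2N+1)/4)^n · δ_{k,k'}, where ρ = (1/2,…,1/2). -/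
/-!
Expanding both symmetric cosines into sums over `σ, τ ∈ Sₙ`, the summand is invariant under
permuting `r`. Every `Sₙ`-orbit of the grid `{0, …, N-1}ⁿ` contains exactly one non-increasing
tuple `r` and has `n! / H_r` elements, so the weighted sum over `D_N^+` is `1/n!` times the sum over
the whole grid. There the sum of products factors into one-dimensional sums
`∑_{v<N} cos (π (a+½) x_v) cos (π (b+½) x_v) = δ_{ab} (2N+1)/4`, which follow from the telescoping
identity `2 sin θ ∑_{v<N} cos ((2v+1)θ) = sin (2Nθ)`. What remains counts the pairs `(σ, τ)`
with `k ∘ σ = k' ∘ τ`: for non-increasing `k, k'` there are `n! H_k` of them if `k = k'` and none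
otherwise.
-/

open Real Finset

/-- The symmetric multivariate cosine function
`cos⁺_λ(x) = Σ_{σ ∈ S_n} ∏_{i=1}^n cos(π λ_{σ(i)} x_i)`. -/
noncomputable def cosPlus (n : ℕ) (lam x : Fin n → ℝ) : ℝ :=
  ∑ σ : Equiv.Perm (Fin n), ∏ i : Fin n, Real.cos (Real.pi * lam (σ i) * x i)

/-- `H_k`, the order of the stabilizer of `k` under the permutation action of `S_n`
(where `σ(k)_i = k_{σ(i)}`, i.e. `σ(k) = k ∘ σ`). -/
def Hstab {n : ℕ} {α : Type*} [DecidableEq α] (k : Fin n → α) : ℕ :=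
  (Finset.univ.filter fun σ : Equiv.Perm (Fin n) => k ∘ σ = k).card

lemma sum_range_cos_odd_mul_mul_two_sin (M : ℕ) (θ : ℝ) :
    (∑ r ∈ range M, cos ((2 * r + 1) * θ)) * (2 * sin θ) = sin (2 * M * θ) := by
  induction M with
  | zero => simp
  | succ M ih =>
    have h := sin_sub_sin (2 * (M + 1) * θ) (2 * M * θ)
    rw [show (2 * (M + 1) * θ - 2 * M * θ) / 2 = θ by ring,
      show (2 * (M + 1) * θ + 2 * M * θ) / 2 = (2 * M + 1) * θ by ring] at h
    rw [sum_range_succ, add_mul, ih]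
    push_cast
    linarith

lemma sum_range_cos_odd_mul_int_mul_pi_div (N : ℕ) (m : ℤ) (hm : ¬ (2 * N + 1 : ℤ) ∣ m) :
    ∑ r ∈ range N, cos ((2 * r + 1) * (m * π / (2 * N + 1))) = -cos (m * π) / 2 := by
  set θ := m * π / (2 * N + 1) with hθ
  have hsin : sin θ ≠ 0 := by
    refine sin_ne_zero_iff.mpr fun j hj => hm ⟨j, ?_⟩
    have : (j : ℝ) * (2 * N + 1) = m := by
      rw [hθ, eq_div_iff (by positivity)] at hj
      nlinarith [pi_pos]
    exact_mod_cast (by push_cast; rw [← this]; ring : ((m : ℤ) : ℝ) = ((2 * N + 1) * j : ℤ))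
  have h2N : 2 * (N : ℝ) * θ = m * π - θ := by
    rw [hθ]; field_simp; ring
  have key := sum_range_cos_odd_mul_mul_two_sin N θ
  rw [h2N, sin_sub, sin_int_mul_pi, zero_mul, zero_sub, ← neg_mul] at key
  rw [eq_div_iff two_ne_zero]
  exact mul_right_cancel₀ hsin (by linear_combination key)

lemma cos_int_mul_pi_eq_neg_of_odd_add {m₁ m₂ : ℤ} (h : Odd (m₁ + m₂)) :
    cos (m₁ * π) = -cos (m₂ * π) := by
  obtain ⟨t, ht⟩ := h
  rw [show (m₁ : ℝ) * π = π - m₂ * π + t * (2 * π) by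
    rw [show (m₁ : ℝ) = 2 * t + 1 - m₂ by exact_mod_cast (by omega : m₁ = 2 * t + 1 - m₂)]; ring,
    cos_add_int_mul_two_pi, cos_pi_sub]

lemma sum_range_cos_mul_cos_eq_ite (N a b : ℕ) (ha : a < N) (hb : b < N) :
    ∑ v ∈ range N, cos (π * (a + 1 / 2) * (2 * (v + 1 / 2) / (2 * N + 1))) *
        cos (π * (b + 1 / 2) * (2 * (v + 1 / 2) / (2 * N + 1)))
      = if a = b then (2 * N + 1 : ℝ) / 4 else 0 := by
  -- product-to-sum; since `m₁ + m₂` is odd, the two boundary terms `-cos (mᵢ π) / 2` cancel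
  set m₁ : ℤ := a + b + 1
  set m₂ : ℤ := a - b
  have hprod : ∀ v : ℕ, cos (π * (a + 1 / 2) * (2 * (v + 1 / 2) / (2 * N + 1))) *
        cos (π * (b + 1 / 2) * (2 * (v + 1 / 2) / (2 * N + 1)))
      = (cos ((2 * v + 1) * (m₁ * π / (2 * N + 1)))
          + cos ((2 * v + 1) * (m₂ * π / (2 * N + 1)))) / 2 := by
    intro v
    rw [show (2 * v + 1) * (m₁ * π / (2 * N + 1))
          = π * (a + 1 / 2) * (2 * (v + 1 / 2) / (2 * N + 1))
            + π * (b + 1 / 2) * (2 * (v + 1 / 2) / (2 * N + 1)) by push_cast [m₁]; ring,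
      show (2 * v + 1) * (m₂ * π / (2 * N + 1))
          = π * (a + 1 / 2) * (2 * (v + 1 / 2) / (2 * N + 1))
            - π * (b + 1 / 2) * (2 * (v + 1 / 2) / (2 * N + 1)) by push_cast [m₂]; ring,
      cos_add, cos_sub]
    ring
  have hdvd : ∀ m : ℤ, m ≠ 0 → |m| < 2 * N + 1 → ¬ (2 * N + 1 : ℤ) ∣ m :=
    fun m hm hlt hdvd => hm (Int.eq_zero_of_abs_lt_dvd hdvd hlt)
  have hS₁ := sum_range_cos_odd_mul_int_mul_pi_div N m₁ (hdvd m₁ (by omega) (by rw [abs_lt]; omega))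
  have hcos := cos_int_mul_pi_eq_neg_of_odd_add (m₁ := m₁) (m₂ := m₂) ⟨a, by omega⟩
  rw [sum_congr rfl fun v _ => hprod v, ← sum_div, sum_add_distrib, hS₁, hcos]
  split_ifs with hab
  · simp only [m₂, hab, sub_self, Int.cast_zero, zero_mul, cos_zero, neg_neg, zero_div,
      mul_zero, sum_const, card_range, nsmul_eq_mul, mul_one]
    ring
  · rw [sum_range_cos_odd_mul_int_mul_pi_div N m₂ (hdvd m₂ (by omega) (by rw [abs_lt]; omega))]
    ring

section Rearrangement

variable {n : ℕ} {α : Type*}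

lemma card_filter_comp_eq_comp [DecidableEq α] (r : Fin n → α) (σ₀ : Equiv.Perm (Fin n)) :
    #{σ : Equiv.Perm (Fin n) | r ∘ σ = r ∘ σ₀} = Hstab r := by
  refine card_equiv (Equiv.mulRight σ₀⁻¹) fun σ => ?_
  simp only [mem_filter, mem_univ, true_and, Equiv.coe_mulRight, Equiv.Perm.coe_mul]
  constructor
  · intro h
    funext i
    simpa using congrFun h (σ₀⁻¹ i)
  · intro h
    funext i
    simpa using congrFun h (σ₀ i)

lemma Hstab_comp_of_injective {β : Type*} [DecidableEq α] [DecidableEq β] {f : α → β}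
    (hf : Function.Injective f) (k : Fin n → α) : Hstab (f ∘ k) = Hstab k := by
  simp only [Hstab, Function.comp_assoc, (hf.comp_left).eq_iff]

variable [LinearOrder α]

lemma comp_perm_eq_self_of_antitone {r : Fin n → α} {σ : Equiv.Perm (Fin n)}
    (hr : Antitone r) (hrσ : Antitone (r ∘ σ)) : r ∘ σ = r :=
  Tuple.unique_antitone (τ := Equiv.refl _) hrσ hr

def antitoneSortPerm (s : Fin n → α) : Equiv.Perm (Fin n) :=
  Tuple.sort (OrderDual.toDual ∘ s)

lemma antitone_comp_antitoneSortPerm (s : Fin n → α) : Antitone (s ∘ antitoneSortPerm s) :=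
  monotone_toDual_comp_iff.mp (Tuple.monotone_sort (OrderDual.toDual ∘ s))

lemma card_filter_comp_antitoneSortPerm_mul_Hstab [Fintype α] {r : Fin n → α} (hr : Antitone r) :
    #{s : Fin n → α | s ∘ antitoneSortPerm s = r} * Hstab r = n.factorial := by
  have hmaps : ∀ σ ∈ (univ : Finset (Equiv.Perm (Fin n))),
      r ∘ σ ∈ ({s : Fin n → α | s ∘ antitoneSortPerm s = r} : Finset _) := by
    intro σ _
    simp only [mem_filter, mem_univ, true_and]
    exact comp_perm_eq_self_of_antitone (σ := (antitoneSortPerm (r ∘ σ)).trans σ) hr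
        (antitone_comp_antitoneSortPerm (r ∘ σ))
  have hcard : n.factorial = #(univ : Finset (Equiv.Perm (Fin n))) := by
    rw [card_univ, Fintype.card_perm, Fintype.card_fin]
  rw [hcard, card_eq_sum_card_fiberwise hmaps]
  refine (sum_const_nat fun s hs => ?_).symm
  have hs : s = r ∘ ⇑(antitoneSortPerm s)⁻¹ := by
    rw [← (mem_filter.mp hs).2, Function.comp_assoc, ← Equiv.Perm.coe_mul, mul_inv_cancel,
      Equiv.Perm.coe_one, Function.comp_id]
  rw [hs]
  exact card_filter_comp_eq_comp r _

open Classical in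
lemma sum_antitone_inv_Hstab_mul [Fintype α] (F : (Fin n → α) → ℝ)
    (hF : ∀ s (σ : Equiv.Perm (Fin n)), F (s ∘ σ) = F s) :
    ∑ r with Antitone r, (Hstab r : ℝ)⁻¹ * F r = (n.factorial : ℝ)⁻¹ * ∑ s, F s := by
  have hmaps : ∀ s ∈ (univ : Finset (Fin n → α)),
      s ∘ antitoneSortPerm s ∈ ({r | Antitone r} : Finset _) := fun s _ => by
    simpa only [mem_filter, mem_univ, true_and] using antitone_comp_antitoneSortPerm s
  rw [← sum_fiberwise_of_maps_to hmaps, mul_sum]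
  refine sum_congr rfl fun r hr => ?_
  have hconst : ∀ s ∈ ({s | s ∘ antitoneSortPerm s = r} : Finset _), F s = F r := by
    intro s hs
    rw [← (mem_filter.mp hs).2, hF]
  rw [sum_congr rfl hconst, sum_const, nsmul_eq_mul]
  have hcard : (#{s : Fin n → α | s ∘ antitoneSortPerm s = r} : ℝ) * Hstab r = n.factorial := by
    exact_mod_cast card_filter_comp_antitoneSortPerm_mul_Hstab (mem_filter.mp hr).2
  have hne : (#{s : Fin n → α | s ∘ antitoneSortPerm s = r} : ℝ) * Hstab r ≠ 0 := by
    rw [hcard]; positivity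
  obtain ⟨hcard_ne, hHstab_ne⟩ := mul_ne_zero_iff.mp hne
  rw [← hcard]
  field_simp

lemma card_comp_eq_comp_of_antitone {p q : Fin n → α} (hp : Antitone p)
    (hq : Antitone q) :
    #{x : Equiv.Perm (Fin n) × Equiv.Perm (Fin n) | p ∘ x.1 = q ∘ x.2}
      = if p = q then n.factorial * Hstab p else 0 := by
  split_ifs with hpq
  · subst hpq
    rw [card_filter, Fintype.sum_prod_type]
    have hfiber : ∀ σ : Equiv.Perm (Fin n),
        ∑ τ : Equiv.Perm (Fin n), (if p ∘ (σ, τ).1 = p ∘ (σ, τ).2 then 1 else 0) = Hstab p := by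
      intro σ
      simp only [← card_filter, eq_comm (a := p ∘ σ), card_filter_comp_eq_comp]
    simp only [hfiber, sum_const, card_univ, Fintype.card_perm, Fintype.card_fin, smul_eq_mul]
  · rw [card_eq_zero, filter_eq_empty_iff]
    rintro ⟨σ, τ⟩ - h
    have hq' : p ∘ ⇑(τ⁻¹.trans σ) = q := by
      funext i
      simpa using congrFun h (τ⁻¹ i)
    exact hpq (by rw [← hq', comp_perm_eq_self_of_antitone hp (hq' ▸ hq)])

end Rearrangement

lemma cosPlus_comp_perm (n : ℕ) (lam x : Fin n → ℝ) (σ : Equiv.Perm (Fin n)) :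
    cosPlus n lam (fun i => x (σ i)) = cosPlus n lam x := by
  unfold cosPlus
  rw [← Equiv.sum_comp (Equiv.mulRight σ⁻¹)
    (fun τ : Equiv.Perm (Fin n) => ∏ i, cos (π * lam (τ i) * x i))]
  refine sum_congr rfl fun τ _ => ?_
  rw [← Equiv.prod_comp σ.symm (fun i => cos (π * lam (τ i) * x (σ i)))]
  refine prod_congr rfl fun i _ => ?_
  simp [Equiv.mulRight]

lemma sum_cosPlus_mul_cosPlus {ι : Type*} [Fintype ι] (n : ℕ) (x : ι → ℝ) (lam mu : Fin n → ℝ)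
    (c : ℝ) (horth : ∀ i j, ∑ v, cos (π * lam i * x v) * cos (π * mu j * x v)
      = if lam i = mu j then c else 0) :
    ∑ s : Fin n → ι, cosPlus n lam (fun i => x (s i)) * cosPlus n mu (fun i => x (s i))
      = c ^ n * #{p : Equiv.Perm (Fin n) × Equiv.Perm (Fin n) | lam ∘ p.1 = mu ∘ p.2} := by
  have hpair : ∀ σ τ : Equiv.Perm (Fin n),
      ∑ s : Fin n → ι, ∏ i, cos (π * lam (σ i) * x (s i)) * cos (π * mu (τ i) * x (s i))
        = if lam ∘ σ = mu ∘ τ then c ^ n else 0 := by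
    intro σ τ
    rw [← Fintype.prod_sum (fun i v => cos (π * lam (σ i) * x v) * cos (π * mu (τ i) * x v))]
    simp only [horth, Fintype.prod_ite_zero, prod_const, card_univ, Fintype.card_fin, funext_iff,
      Function.comp_apply]
  unfold cosPlus
  simp_rw [sum_mul_sum, ← prod_mul_distrib]
  rw [sum_comm, sum_congr rfl fun σ _ => sum_comm]
  simp only [hpair]
  rw [← Fintype.sum_prod_type' (fun σ τ : Equiv.Perm (Fin n) =>
      if lam ∘ σ = mu ∘ τ then c ^ n else 0), ← sum_filter, sum_const, nsmul_eq_mul, mul_comm]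

theorem SMDCT_VIII_orthogonality_general (n N : ℕ) (hN : 1 ≤ N)
    (k k' : Fin n → ℕ)
    (hk : ∀ i j : Fin n, i ≤ j → k j ≤ k i) (hkb : ∀ i, k i ≤ N - 1)
    (hk' : ∀ i j : Fin n, i ≤ j → k' j ≤ k' i) (hk'b : ∀ i, k' i ≤ N - 1) :
    ∑ r ∈ Finset.univ.filter
        (fun r : Fin n → Fin N => ∀ i j : Fin n, i ≤ j → (r j : ℕ) ≤ (r i : ℕ)),
      ((Hstab r : ℝ))⁻¹ *
        cosPlus n (fun i => (k i : ℝ) + 1 / 2)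
          (fun i => 2 * (((r i : ℕ) : ℝ) + 1 / 2) / (2 * N + 1)) *
        cosPlus n (fun i => (k' i : ℝ) + 1 / 2)
          (fun i => 2 * (((r i : ℕ) : ℝ) + 1 / 2) / (2 * N + 1))
      = (Hstab k : ℝ) * ((2 * (N : ℝ) + 1) / 4) ^ n *
          (if k = k' then (1 : ℝ) else 0) := by
  classical
  let shift : ℕ → ℝ := fun a => a + 1 / 2
  have hshift : StrictMono shift := fun a b hab => by simp [shift, hab]
  let x : Fin N → ℝ := fun v => 2 * ((v : ℕ) + 1 / 2) / (2 * N + 1)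
  have hdominant : (univ.filter fun r : Fin n → Fin N => ∀ i j : Fin n, i ≤ j → (r j : ℕ) ≤ r i)
      = univ.filter fun r => Antitone r :=
    filter_congr fun r _ => ⟨fun h _ _ hij => Fin.le_def.mpr (h _ _ hij), fun h _ _ hij => h hij⟩
  have horth : ∀ i j, ∑ v, cos (π * shift (k i) * x v) * cos (π * shift (k' j) * x v)
      = if shift (k i) = shift (k' j) then (2 * N + 1 : ℝ) / 4 else 0 := by
    intro i j
    simp only [hshift.injective.eq_iff]
    rw [Fin.sum_univ_eq_sum_range (fun v =>
      cos (π * shift (k i) * (2 * (v + 1 / 2) / (2 * N + 1))) *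
        cos (π * shift (k' j) * (2 * (v + 1 / 2) / (2 * N + 1))))]
    exact sum_range_cos_mul_cos_eq_ite N _ _ (by have := hkb i; omega) (by have := hk'b j; omega)
  rw [hdominant]
  change ∑ r with Antitone r, (Hstab r : ℝ)⁻¹ * cosPlus n (shift ∘ k) (fun i => x (r i)) *
    cosPlus n (shift ∘ k') (fun i => x (r i)) = _
  simp only [mul_assoc (Hstab _ : ℝ)⁻¹]
  rw [sum_antitone_inv_Hstab_mul _ fun s σ => by
      simp only [Function.comp_apply, cosPlus_comp_perm n _ (fun i => x (s i))],
    sum_cosPlus_mul_cosPlus n x (shift ∘ k) (shift ∘ k') _ horth,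
    card_comp_eq_comp_of_antitone (hshift.monotone.comp_antitone hk)
      (hshift.monotone.comp_antitone hk'), Hstab_comp_of_injective hshift.injective]
  simp only [(hshift.injective.comp_left).eq_iff]
  split_ifs
  · push_cast
    field_simp
  · simp

theorem SMDCT_VIII_orthogonality (n N : ℕ) (hn : 1 ≤ n) (hN : 1 ≤ N)
    (k k' : Fin n → ℕ)
    (hk : ∀ i j : Fin n, i ≤ j → k j ≤ k i) (hkb : ∀ i, k i ≤ N - 1)
    (hk' : ∀ i j : Fin n, i ≤ j → k' j ≤ k' i) (hk'b : ∀ i, k' i ≤ N - 1) :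
    ∑ r ∈ Finset.univ.filter
        (fun r : Fin n → Fin N => ∀ i j : Fin n, i ≤ j → (r j : ℕ) ≤ (r i : ℕ)),
      ((Hstab r : ℝ))⁻¹ *
        cosPlus n (fun i => (k i : ℝ) + 1 / 2)
          (fun i => 2 * (((r i : ℕ) : ℝ) + 1 / 2) / (2 * N + 1)) *
        cosPlus n (fun i => (k' i : ℝ) + 1 / 2)
          (fun i => 2 * (((r i : ℕ) : ℝ) + 1 / 2) / (2 * N + 1))
      = (Hstab k : ℝ) * ((2 * (N : ℝ) + 1) / 4) ^ n *
          (if k = k' then (1 : ℝ) else 0) :=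
  SMDCT_VIII_orthogonality_general n N hN k k' hk hkb hk' hk'b
end

section
/- (Product decomposition, symmetric–symmetric) Let n ≥ 1 and let λ = (λ_1,…,λ_n), μ = (μ_1,…,μ_n) ∈ ℝ^n. Then for all x ∈ ℝ^n, cos⁺_λ(x) · cos⁺_μ(x) = 2^{−n} · Σ_{σ ∈ S_n} Σ_{a ∈ {−1,+1}^n} cos⁺_{(λ_1 + a_1 μ_{σ(1)}, …, λ_n + a_n μ_{σ(n)})}(x). -/
/-!
Expanding the left-hand side gives `Σ_{σ,τ} ∏_i cos(π λ_{σ i} x_i) cos(π μ_{τ i} x_i)`, and each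
factor is `½ Σ_{ε = ±1} cos(π (λ_{σ i} + ε μ_{τ i}) x_i)`. On the right-hand side, the substitution
`σ ↦ σ ρ`, `a ↦ a ∘ ρ` (with `ρ` the permutation inside `cos⁺`) turns the summand into the same
product indexed by `(ρ, σ, a)`.
-/

open Real Finset

lemma Int.sum_units {M : Type*} [AddCommMonoid M] (f : ℤˣ → M) :
    ∑ ε : ℤˣ, f ε = f 1 + f (-1) := by
  rw [show (univ : Finset ℤˣ) = {1, -1} by decide, sum_pair (by decide)]

lemma cos_mul_cos_eq_sum_units (A B : ℝ) :
    cos A * cos B = 2⁻¹ * ∑ ε : ℤˣ, cos (A + ((ε : ℤ) : ℝ) * B) := by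
  rw [Int.sum_units]
  push_cast
  rw [one_mul, neg_one_mul, ← sub_eq_add_neg, cos_add, cos_sub]
  ring

lemma prod_cos_mul_prod_cos {ι : Type*} [Fintype ι] [DecidableEq ι] (A B : ι → ℝ) :
    (∏ i, cos (A i)) * ∏ i, cos (B i)
      = ((2 : ℝ) ^ Fintype.card ι)⁻¹ * ∑ a : ι → ℤˣ, ∏ i, cos (A i + ((a i : ℤ) : ℝ) * B i) := by
  simp_rw [← prod_mul_distrib, cos_mul_cos_eq_sum_units]
  rw [prod_mul_distrib, prod_const, card_univ, inv_pow, Fintype.prod_sum]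

lemma cosPlus_mul_cosPlus (n : ℕ) (lam mu x : Fin n → ℝ) :
    cosPlus n lam x * cosPlus n mu x
      = ((2 : ℝ) ^ n)⁻¹ * ∑ σ : Equiv.Perm (Fin n), ∑ τ : Equiv.Perm (Fin n),
          ∑ a : Fin n → ℤˣ, ∏ i, cos (π * (lam (σ i) + ((a i : ℤ) : ℝ) * mu (τ i)) * x i) := by
  rw [cosPlus, cosPlus, sum_mul_sum, mul_sum]
  refine sum_congr rfl fun σ _ => ?_
  rw [mul_sum]
  refine sum_congr rfl fun τ _ => ?_
  rw [prod_cos_mul_prod_cos, Fintype.card_fin]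
  congr! 4
  ring

lemma sum_perm_sum_pi_sum_perm_reindex {ι α M : Type*} [Fintype ι] [DecidableEq ι] [Fintype α]
    [AddCommMonoid M] (F : Equiv.Perm ι → (ι → α) → Equiv.Perm ι → M) :
    ∑ σ : Equiv.Perm ι, ∑ a : ι → α, ∑ ρ : Equiv.Perm ι, F ρ (a ∘ ρ) (σ * ρ)
      = ∑ ρ : Equiv.Perm ι, ∑ τ : Equiv.Perm ι, ∑ a : ι → α, F ρ a τ := by
  calc _ = ∑ σ : Equiv.Perm ι, ∑ ρ : Equiv.Perm ι, ∑ a : ι → α, F ρ (a ∘ ρ) (σ * ρ) :=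
        sum_congr rfl fun _ _ => sum_comm
    _ = ∑ ρ : Equiv.Perm ι, ∑ σ : Equiv.Perm ι, ∑ a : ι → α, F ρ (a ∘ ρ) (σ * ρ) := sum_comm
    _ = _ := sum_congr rfl fun ρ _ => by
        refine (Equiv.sum_comp (Equiv.mulRight ρ) fun τ => ∑ a : ι → α, F ρ (a ∘ ρ) τ).trans ?_
        exact sum_congr rfl fun τ _ =>
          (Equiv.arrowCongr ρ.symm (Equiv.refl α)).sum_comp fun a => F ρ a τ

theorem product_decomposition_sym_sym_general (n : ℕ)
    (lam mu : Fin n → ℝ) (x : Fin n → ℝ) :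
    cosPlus n lam x * cosPlus n mu x
      = ((2 : ℝ) ^ n)⁻¹ *
          ∑ σ : Equiv.Perm (Fin n), ∑ a : Fin n → ℤˣ,
            cosPlus n (fun i => lam i + ((a i : ℤ) : ℝ) * mu (σ i)) x := by
  rw [cosPlus_mul_cosPlus, ← sum_perm_sum_pi_sum_perm_reindex]
  -- after unfolding `cosPlus`, the two sides agree up to `Equiv.Perm.mul_apply` and `Function.comp`
  rfl

theorem product_decomposition_sym_sym (n : ℕ) (hn : 1 ≤ n)
    (lam mu : Fin n → ℝ) (x : Fin n → ℝ) :
    cosPlus n lam x * cosPlus n mu x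
      = ((2 : ℝ) ^ n)⁻¹ *
          ∑ σ : Equiv.Perm (Fin n), ∑ a : Fin n → ℤˣ,
            cosPlus n (fun i => lam i + ((a i : ℤ) : ℝ) * mu (σ i)) x :=
  product_decomposition_sym_sym_general n lam mu x
end
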